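/- arXiv:1009.1522 — 2 statements merged into one kernel-verified Lean document; each statement's English description precedes it below -/
import Mathlib

section
/- Let A be an n×n complex matrix and let x be a point of the unit sphere of ℂⁿ. Then x is a critical point of the numerical map Φ_A (i.e. the differential of Φ_A at x, as a smooth map from the (2n−1)-dimensional unit sphere to ℂ ≅ ℝ², is not surjective) if and only if there exists θ ∈ [0,π] and λ ∈ ℝ such that H(θ)x = λx, where H(θ) = (e^{−iθ}A + e^{iθ}A*)/2. Moreover, the differential of Φ_A vanishes at x if and only if x is an eigenvector of both A and A*. -/
/-!
On the tangent space `(ℝx)ᗮ` of the sphere, the differential of `Φ_A` at `x` is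
`v ↦ ⟨x, Av⟩ + ⟨v, Ax⟩`. A direction `ω ∈ ℂ ≅ ℝ²` is orthogonal to its image iff
`ω̄ Ax + ω A*x` is real-orthogonal to `(ℝx)ᗮ`, i.e. lies in `ℝx`. The differential fails to be
surjective iff some `ω ≠ 0` has this property; as the property is invariant under real scaling we
may take `ω = e^{iθ}` with `θ ∈ [0, π]`, and then `ω̄ Ax + ω A*x = 2 H(θ) x`. The differential
vanishes iff every `ω` has the property, and `ω = 1, i` already recover `Ax` and `A*x` as
multiples of `x`; conversely `A*x = ᾱ x` whenever `Ax = α x`.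
-/

open MeasureTheory Metric
open scoped Matrix ComplexOrder

noncomputable section

/-- Borel measurable structure on `ℂⁿ` with the Euclidean (ℓ²) norm. -/
instance (n : ℕ) : MeasurableSpace (EuclideanSpace ℂ (Fin n)) := MeasurableSpace.comap WithLp.ofLp MeasurableSpace.pi
instance (n : ℕ) : BorelSpace (EuclideanSpace ℂ (Fin n)) := PiLp.borelSpace 2

/-- The numerical map `Φ_A(x) = ⟨Ax, x⟩` (equal to `x* A x`). -/
def numericalMap {n : ℕ} (A : Matrix (Fin n) (Fin n) ℂ)
    (x : EuclideanSpace ℂ (Fin n)) : ℂ :=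
  (inner ℂ x (Matrix.toEuclideanLin A x) : ℂ)

/-- The normalized (uniform) Euclidean surface measure on the unit sphere of `ℂⁿ`. -/
def sphereUniform (n : ℕ) :
    Measure (sphere (0 : EuclideanSpace ℂ (Fin n)) 1) :=
  ((volume : Measure (EuclideanSpace ℂ (Fin n))).toSphere Set.univ)⁻¹ •
    (volume : Measure (EuclideanSpace ℂ (Fin n))).toSphere

/-- The numerical measure `μ_A`: pushforward of the uniform sphere measure under `Φ_A`. -/
def numericalMeasure {n : ℕ} (A : Matrix (Fin n) (Fin n) ℂ) : Measure ℂ :=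
  (sphereUniform n).map
    (fun x : sphere (0 : EuclideanSpace ℂ (Fin n)) 1 => numericalMap A x)

/-- The numerical range `W(A)`: image of the unit sphere under `Φ_A`. -/
def numericalRange {n : ℕ} (A : Matrix (Fin n) (Fin n) ℂ) : Set ℂ :=
  numericalMap A '' (sphere (0 : EuclideanSpace ℂ (Fin n)) 1)

/-- The Hermitian matrix `H(θ) = (e^{-iθ} A + e^{iθ} A*)/2`. -/
def Hmat {n : ℕ} (A : Matrix (Fin n) (Fin n) ℂ) (θ : ℝ) : Matrix (Fin n) (Fin n) ℂ :=
  (1 / 2 : ℂ) •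
    (Complex.exp (-(θ : ℂ) * Complex.I) • A + Complex.exp ((θ : ℂ) * Complex.I) • Aᴴ)

open Complex ComplexConjugate ContinuousLinearMap Manifold Module Set Submodule
open scoped InnerProductSpace RealInnerProductSpace

section RealInnerProductSpace

variable {E F : Type*} [NormedAddCommGroup E] [InnerProductSpace ℝ E]

theorem Submodule.mem_orthogonal_map_iff [NormedAddCommGroup F] [InnerProductSpace ℝ F]
    (D : E →ₗ[ℝ] F) (P : Submodule ℝ E) {ω : F} {k : E}
    (h : ∀ v, ⟪D v, ω⟫_ℝ = ⟪v, k⟫_ℝ) : ω ∈ (P.map D)ᗮ ↔ k ∈ Pᗮ := by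
  simp [Submodule.mem_orthogonal, h]

variable [NormedAddCommGroup F] [NormedSpace ℝ F] {m : ℕ} [Fact (finrank ℝ E = m + 1)]
  {f : E → F} (x : sphere (0 : E) 1)

theorem range_mfderiv_comp_coe_sphere (hf : DifferentiableAt ℝ f x) :
    (mfderiv (𝓡 m) 𝓘(ℝ, F) (f ∘ (↑)) x : TangentSpace (𝓡 m) x →L[ℝ] F).range =
      (ℝ ∙ (x : E))ᗮ.map (fderiv ℝ f x : E →ₗ[ℝ] F) := by
  rw [mfderiv_comp x hf.mdifferentiableAt
    ((contMDiff_coe_sphere (m := 1) x).mdifferentiableAt one_ne_zero), mfderiv_eq_fderiv]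
  exact (LinearMap.range_comp _ _).trans (congrArg _ (range_mvfderiv_subtypeVal x))

theorem surjective_mfderiv_comp_coe_sphere_iff (hf : DifferentiableAt ℝ f x) :
    Function.Surjective (mfderiv (𝓡 m) 𝓘(ℝ, F) (fun y : sphere (0 : E) 1 => f y) x) ↔
      (ℝ ∙ (x : E))ᗮ.map (fderiv ℝ f x : E →ₗ[ℝ] F) = ⊤ := by
  rw [← range_mfderiv_comp_coe_sphere (m := m) x hf]
  exact LinearMap.range_eq_top.symm

theorem mfderiv_comp_coe_sphere_eq_zero_iff (hf : DifferentiableAt ℝ f x) :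
    mfderiv (𝓡 m) 𝓘(ℝ, F) (fun y : sphere (0 : E) 1 => f y) x = 0 ↔
      (ℝ ∙ (x : E))ᗮ.map (fderiv ℝ f x : E →ₗ[ℝ] F) = ⊥ := by
  rw [← range_mfderiv_comp_coe_sphere (m := m) x hf]
  exact (LinearMap.range_eq_bot.trans (coe_inj (g := 0))).symm

end RealInnerProductSpace

section ComplexInnerProductSpace

variable {E : Type*} [NormedAddCommGroup E] [InnerProductSpace ℂ E] (T : E →L[ℂ] E)

theorem differentiable_inner_self : Differentiable ℝ (fun y => ⟪y, T y⟫_ℂ) :=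
  differentiable_id.inner ℂ (T.differentiable.restrictScalars ℝ)

theorem fderiv_inner_self_apply (x v : E) :
    fderiv ℝ (fun y => ⟪y, T y⟫_ℂ) x v = ⟪x, T v⟫_ℂ + ⟪v, T x⟫_ℂ := by
  rw [fderiv_inner_apply ℂ differentiableAt_fun_id
    (T.differentiableAt.restrictScalars ℝ : DifferentiableAt ℝ (fun y => T y) x),
    show fderiv ℝ T x = T.restrictScalars ℝ from (T.restrictScalars ℝ).fderiv]
  simp

theorem eq_conj_of_apply_eq_smul_of_adjoint_apply_eq_smul [CompleteSpace E] {x : E}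
    (hx : x ≠ 0) {α β : ℂ} (hα : T x = α • x) (hβ : adjoint T x = β • x) : β = conj α := by
  have h := adjoint_inner_right T x x
  rw [hα, hβ, inner_smul_right, inner_smul_left] at h
  exact mul_right_cancel₀ (inner_self_ne_zero.2 hx) h

end ComplexInnerProductSpace

theorem mem_real_span_singleton_iff {V : Type*} [AddCommGroup V] [Module ℂ V] [Module ℝ V]
    [IsScalarTower ℝ ℂ V] {x v : V} : v ∈ ℝ ∙ x ↔ ∃ r : ℝ, (r : ℂ) • x = v := by
  simp only [mem_span_singleton, RCLike.real_smul_eq_coe_smul (K := ℂ)]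
  rfl

theorem Complex.exists_ne_zero_iff_exists_exp_mul_I {P : ℂ → Prop}
    (hP : ∀ (r : ℝ) ω, P ω → P (r * ω)) :
    (∃ ω ≠ 0, P ω) ↔ ∃ θ ∈ Icc (0 : ℝ) Real.pi, P (exp (θ * I)) := by
  refine ⟨fun ⟨ω, hω, hPω⟩ => ?_, fun ⟨θ, _, h⟩ => ⟨_, exp_ne_zero _, h⟩⟩
  have hunit : P (exp (arg ω * I)) := by
    convert hP ‖ω‖⁻¹ ω hPω using 1
    rw [ofReal_inv, eq_inv_mul_iff_mul_eq₀ (ofReal_ne_zero.2 (norm_ne_zero_iff.2 hω)),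
      norm_mul_exp_arg_mul_I]
  rcases le_or_gt 0 (arg ω) with h | h
  · exact ⟨arg ω, ⟨h, arg_le_pi ω⟩, hunit⟩
  · refine ⟨arg ω + Real.pi, ⟨by linarith [neg_pi_lt_arg ω], by linarith⟩, ?_⟩
    convert hP (-1) _ hunit using 1
    push_cast
    rw [add_mul, exp_add, exp_pi_mul_I]
    ring

section EuclideanSpace

variable {ι : Type*} [Fintype ι]

theorem EuclideanSpace.real_inner_eq_re_inner (x y : EuclideanSpace ℂ ι) :
    ⟪x, y⟫_ℝ = re ⟪x, y⟫_ℂ := by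
  simp [PiLp.inner_apply, Complex.re_sum, Complex.inner]

/-- For `ω = e^{iθ}` this is twice the operator `H(θ)`. -/
def hermRot (T : EuclideanSpace ℂ ι →L[ℂ] EuclideanSpace ℂ ι) (ω : ℂ) :
    EuclideanSpace ℂ ι →L[ℂ] EuclideanSpace ℂ ι :=
  conj ω • T + ω • adjoint T

variable (T : EuclideanSpace ℂ ι →L[ℂ] EuclideanSpace ℂ ι)

theorem hermRot_ofReal_mul (r : ℝ) (ω : ℂ) : hermRot T (r * ω) = (r : ℂ) • hermRot T ω := by
  simp only [hermRot, map_mul, conj_ofReal, smul_add, smul_smul]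

theorem hermRot_ofReal_mul_apply_mem_span {x : EuclideanSpace ℂ ι} (r : ℝ) {ω : ℂ}
    (h : hermRot T ω x ∈ ℝ ∙ x) : hermRot T (r * ω) x ∈ ℝ ∙ x := by
  obtain ⟨s, hs⟩ := mem_real_span_singleton_iff.1 h
  refine mem_real_span_singleton_iff.2 ⟨r * s, ?_⟩
  rw [hermRot_ofReal_mul, smul_apply, ← hs, ofReal_mul, mul_smul]

theorem real_inner_fderiv_inner_self_apply (x v : EuclideanSpace ℂ ι) (ω : ℂ) :
    ⟪fderiv ℝ (fun y => ⟪y, T y⟫_ℂ) x v, ω⟫_ℝ = ⟪v, hermRot T ω x⟫_ℝ := by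
  rw [fderiv_inner_self_apply, Complex.inner, EuclideanSpace.real_inner_eq_re_inner, hermRot,
    add_apply, smul_apply, smul_apply, inner_add_right, inner_smul_right, inner_smul_right,
    ← adjoint_inner_left T v x, ← inner_conj_symm v (adjoint T x)]
  generalize ⟪v, T x⟫_ℂ = a
  generalize ⟪adjoint T x, v⟫_ℂ = b
  simp only [map_add, add_re, add_im, mul_re, conj_re, conj_im]
  ring

theorem mem_orthogonal_map_fderiv_inner_self_iff (x : EuclideanSpace ℂ ι) (ω : ℂ) :
    ω ∈ ((ℝ ∙ x)ᗮ.map (fderiv ℝ (fun y => ⟪y, T y⟫_ℂ) x : EuclideanSpace ℂ ι →ₗ[ℝ] ℂ))ᗮ ↔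
      hermRot T ω x ∈ ℝ ∙ x := by
  rw [Submodule.mem_orthogonal_map_iff _ _ (real_inner_fderiv_inner_self_apply T x · ω),
    Submodule.orthogonal_orthogonal]

variable {m : ℕ} [Fact (finrank ℝ (EuclideanSpace ℂ ι) = m + 1)]
  (x : sphere (0 : EuclideanSpace ℂ ι) 1)

theorem not_surjective_mfderiv_inner_self_iff :
    ¬ Function.Surjective (mfderiv (𝓡 m) 𝓘(ℝ, ℂ)
      (fun y : sphere (0 : EuclideanSpace ℂ ι) 1 => ⟪(y : EuclideanSpace ℂ ι), T y⟫_ℂ) x) ↔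
      ∃ ω ≠ 0, hermRot T ω x ∈ ℝ ∙ (x : EuclideanSpace ℂ ι) := by
  rw [surjective_mfderiv_comp_coe_sphere_iff x (differentiable_inner_self T x),
    ← orthogonal_eq_bot_iff, ← ne_eq, Submodule.ne_bot_iff]
  simp_rw [mem_orthogonal_map_fderiv_inner_self_iff, and_comm]

theorem mfderiv_inner_self_eq_zero_iff :
    mfderiv (𝓡 m) 𝓘(ℝ, ℂ)
      (fun y : sphere (0 : EuclideanSpace ℂ ι) 1 => ⟪(y : EuclideanSpace ℂ ι), T y⟫_ℂ) x = 0 ↔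
      ∀ ω, hermRot T ω x ∈ ℝ ∙ (x : EuclideanSpace ℂ ι) := by
  rw [mfderiv_comp_coe_sphere_eq_zero_iff x (differentiable_inner_self T x),
    ← orthogonal_eq_top_iff, eq_top_iff']
  simp_rw [mem_orthogonal_map_fderiv_inner_self_iff]

theorem forall_hermRot_apply_mem_span_iff {x : EuclideanSpace ℂ ι} (hx : x ≠ 0) :
    (∀ ω, hermRot T ω x ∈ ℝ ∙ x) ↔
      (∃ α : ℂ, T x = α • x) ∧ ∃ β : ℂ, adjoint T x = β • x := by
  simp only [mem_real_span_singleton_iff]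
  constructor
  · intro h
    obtain ⟨a, ha⟩ := h 1
    obtain ⟨b, hb⟩ := h I
    replace ha : (a : ℂ) • x = T x + adjoint T x := by simpa [hermRot] using ha
    replace hb : (I * b) • x = T x - adjoint T x := by
      rw [mul_smul, hb]
      simp [hermRot, smul_smul, sub_eq_add_neg]
    exact ⟨⟨(a + I * b) / 2, by linear_combination (norm := module) (-1 / 2 : ℂ) • (ha + hb)⟩,
      ⟨(a - I * b) / 2, by linear_combination (norm := module) (-1 / 2 : ℂ) • (ha - hb)⟩⟩
  · rintro ⟨⟨α, hα⟩, ⟨β, hβ⟩⟩ ω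
    have hβα := eq_conj_of_apply_eq_smul_of_adjoint_apply_eq_smul T hx hα hβ
    refine ⟨2 * (conj ω * α).re, ?_⟩
    rw [hermRot, add_apply, smul_apply, smul_apply, hα, hβ, hβα, smul_smul, smul_smul,
      ← add_smul, show ω * conj α = conj (conj ω * α) by simp, add_conj]

end EuclideanSpace

theorem Matrix.toEuclideanCLM_conjTranspose {𝕜 ι : Type*} [RCLike 𝕜] [Fintype ι]
    [DecidableEq ι] (A : Matrix ι ι 𝕜) :
    toEuclideanCLM (n := ι) (𝕜 := 𝕜) Aᴴ = adjoint (toEuclideanCLM (n := ι) (𝕜 := 𝕜) A) :=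
  (map_star _ A).trans (star_eq_adjoint _)

theorem toEuclideanCLM_Hmat {n : ℕ} (A : Matrix (Fin n) (Fin n) ℂ) (θ : ℝ) :
    Matrix.toEuclideanCLM (n := Fin n) (𝕜 := ℂ) (Hmat A θ) =
      (1 / 2 : ℂ) • hermRot (Matrix.toEuclideanCLM (n := Fin n) (𝕜 := ℂ) A) (exp (θ * I)) := by
  have hconj : conj (exp (θ * I)) = exp (-θ * I) := by
    rw [← exp_conj]
    simp
  rw [Hmat, hermRot, hconj, map_smul, map_add, map_smul, map_smul,
    Matrix.toEuclideanCLM_conjTranspose]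

theorem exists_toEuclideanLin_Hmat_apply_eq_smul_iff {n : ℕ} (A : Matrix (Fin n) (Fin n) ℂ)
    (θ : ℝ) (x : EuclideanSpace ℂ (Fin n)) :
    (∃ lam : ℝ, Matrix.toEuclideanLin (Hmat A θ) x = (lam : ℂ) • x) ↔
      hermRot (Matrix.toEuclideanCLM (n := Fin n) (𝕜 := ℂ) A) (exp (θ * I)) x ∈ ℝ ∙ x := by
  rw [mem_real_span_singleton_iff]
  change (∃ lam : ℝ, Matrix.toEuclideanCLM (n := Fin n) (𝕜 := ℂ) (Hmat A θ) x = _) ↔ _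
  simp only [toEuclideanCLM_Hmat, smul_apply]
  constructor
  · rintro ⟨lam, h⟩
    exact ⟨2 * lam, by push_cast; linear_combination (norm := module) (-2 : ℂ) • h⟩
  · rintro ⟨r, h⟩
    exact ⟨r / 2, by push_cast; linear_combination (norm := module) (-1 / 2 : ℂ) • h⟩

open Manifold in
theorem criticalPoint_numericalMap_iff_general
    (n : ℕ)
    [Fact (Module.finrank ℝ (EuclideanSpace ℂ (Fin n)) = 2 * n - 1 + 1)]
    (A : Matrix (Fin n) (Fin n) ℂ)
    (x : sphere (0 : EuclideanSpace ℂ (Fin n)) 1) :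
    (¬ Function.Surjective
        (mfderiv (𝓡 (2 * n - 1)) 𝓘(ℝ, ℂ)
          (fun y : sphere (0 : EuclideanSpace ℂ (Fin n)) 1 => numericalMap A y) x) ↔
      ∃ θ ∈ Set.Icc (0 : ℝ) Real.pi, ∃ lam : ℝ,
        Matrix.toEuclideanLin (Hmat A θ) (x : EuclideanSpace ℂ (Fin n)) =
          (lam : ℂ) • (x : EuclideanSpace ℂ (Fin n))) ∧
    ((mfderiv (𝓡 (2 * n - 1)) 𝓘(ℝ, ℂ)
          (fun y : sphere (0 : EuclideanSpace ℂ (Fin n)) 1 => numericalMap A y) x) = 0 ↔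
      ((∃ α : ℂ, Matrix.toEuclideanLin A (x : EuclideanSpace ℂ (Fin n)) =
          α • (x : EuclideanSpace ℂ (Fin n))) ∧
       (∃ β : ℂ, Matrix.toEuclideanLin Aᴴ (x : EuclideanSpace ℂ (Fin n)) =
          β • (x : EuclideanSpace ℂ (Fin n))))) := by
  let T := Matrix.toEuclideanCLM (n := Fin n) (𝕜 := ℂ) A
  refine ⟨(not_surjective_mfderiv_inner_self_iff (m := 2 * n - 1) T x).trans ?_,
    (mfderiv_inner_self_eq_zero_iff (m := 2 * n - 1) T x).trans ?_⟩
  · rw [exists_ne_zero_iff_exists_exp_mul_I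
      (P := fun ω => hermRot T ω x ∈ ℝ ∙ (x : EuclideanSpace ℂ (Fin n)))
      fun r _ => hermRot_ofReal_mul_apply_mem_span T r]
    simp_rw [exists_toEuclideanLin_Hmat_apply_eq_smul_iff]
    rfl
  · rw [forall_hermRot_apply_mem_span_iff T (ne_zero_of_mem_unit_sphere x),
      ← Matrix.toEuclideanCLM_conjTranspose]
    rfl

open Manifold in
/-- Characterization of the critical points of the numerical map `Φ_A` on the unit
sphere of `ℂⁿ` (a real manifold of dimension `2n−1`): the differential fails to be
surjective iff `x` is an eigenvector of some `H(θ)`, `θ ∈ [0,π]`; and it vanishes iff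
`x` is a common eigenvector of `A` and `A*`. -/
theorem criticalPoint_numericalMap_iff
    (n : ℕ) (hn : 1 ≤ n)
    [Fact (Module.finrank ℝ (EuclideanSpace ℂ (Fin n)) = 2 * n - 1 + 1)]
    (A : Matrix (Fin n) (Fin n) ℂ)
    (x : sphere (0 : EuclideanSpace ℂ (Fin n)) 1) :
    (¬ Function.Surjective
        (mfderiv (𝓡 (2 * n - 1)) 𝓘(ℝ, ℂ)
          (fun y : sphere (0 : EuclideanSpace ℂ (Fin n)) 1 => numericalMap A y) x) ↔
      ∃ θ ∈ Set.Icc (0 : ℝ) Real.pi, ∃ lam : ℝ,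
        Matrix.toEuclideanLin (Hmat A θ) (x : EuclideanSpace ℂ (Fin n)) =
          (lam : ℂ) • (x : EuclideanSpace ℂ (Fin n))) ∧
    ((mfderiv (𝓡 (2 * n - 1)) 𝓘(ℝ, ℂ)
          (fun y : sphere (0 : EuclideanSpace ℂ (Fin n)) 1 => numericalMap A y) x) = 0 ↔
      ((∃ α : ℂ, Matrix.toEuclideanLin A (x : EuclideanSpace ℂ (Fin n)) =
          α • (x : EuclideanSpace ℂ (Fin n))) ∧
       (∃ β : ℂ, Matrix.toEuclideanLin Aᴴ (x : EuclideanSpace ℂ (Fin n)) =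
          β • (x : EuclideanSpace ℂ (Fin n))))) :=
  criticalPoint_numericalMap_iff_general n A x
end
end

section
/- Let A be an n×n complex matrix, z ∈ ℂ, and define g : ℝ → ℝ by g(θ) = det(H(θ) − Re(z e^{−iθ}) Iₙ), where H(θ) = (e^{−iθ}A + e^{iθ}A*)/2. If g is not identically zero, then the set {θ ∈ [0,π) : g(θ) = 0} has at most n elements. -/
open MeasureTheory Metric
open scoped Matrix ComplexOrder

noncomputable section

/-!
Write `M = A - z I`. Then `H(θ) - Re(z e^{-iθ}) I` is the Hermitian part of `e^{-iθ} M`, which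
factors as `(e^{-iθ}/2) (M + e^{2iθ} M*)`. Hence `g(θ) = (e^{-iθ}/2)^n P(e^{2iθ})` for the
polynomial `P(w) = det(M + w M*)` of degree at most `n`. If `g ≢ 0` then `P ≠ 0`, so `P` has at
most `n` roots, and `θ ↦ e^{2iθ}` is injective on `[0, π)`.
-/

open Complex Matrix Polynomial Set

theorem Polynomial.finite_and_ncard_le_natDegree_of_injOn {R α : Type*} [CommRing R] [IsDomain R]
    {p : R[X]} (hp : p ≠ 0) {s : Set α} {f : α → R} (hroot : ∀ x ∈ s, p.IsRoot (f x))
    (hf : InjOn f s) : s.Finite ∧ s.ncard ≤ p.natDegree := by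
  classical
  have hmaps : ∀ x ∈ s, f x ∈ (p.roots.toFinset : Set R) := fun x hx ↦ by
    simpa [mem_roots hp] using hroot x hx
  have hfin : (p.roots.toFinset : Set R).Finite := p.roots.toFinset.finite_toSet
  refine ⟨.of_finite_image (hfin.subset (image_subset_iff.2 hmaps)) hf, ?_⟩
  calc s.ncard ≤ (p.roots.toFinset : Set R).ncard := ncard_le_ncard_of_injOn f hmaps hf hfin
    _ ≤ Multiset.card p.roots := by rw [ncard_coe_finset]; exact Multiset.toFinset_card_le _
    _ ≤ p.natDegree := card_roots' p

theorem Matrix.eval_det_X_smul_map_C_add {R ι : Type*} [CommRing R] [Fintype ι] [DecidableEq ι]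
    (A B : Matrix ι ι R) (w : R) :
    (det ((X : R[X]) • A.map C + B.map C)).eval w = det (w • A + B) := by
  rw [← coe_evalRingHom, RingHom.map_det]
  congr 1
  ext i j
  simp only [map_apply, add_apply, smul_apply, RingHom.mapMatrix_apply, coe_evalRingHom, eval_add,
    eval_C, smul_eq_mul, eval_mul, eval_X]

theorem injOn_exp_two_mul_I : InjOn (fun θ : ℝ ↦ cexp (2 * θ * I)) (Ico 0 Real.pi) := by
  intro x ⟨hx0, hx⟩ y ⟨hy0, hy⟩ h
  have hxy : 2 * x = 2 * y :=
    Circle.exp_injOn_Ico (a := 0) (b := 2 * Real.pi) (by linarith)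
      ⟨by linarith, by linarith⟩ ⟨by linarith, by linarith⟩
      (Subtype.ext (by simpa [Circle.coe_exp] using h))
  linarith

section Hmat

variable {n : ℕ}

theorem Hmat_sub (A B : Matrix (Fin n) (Fin n) ℂ) (θ : ℝ) :
    Hmat (A - B) θ = Hmat A θ - Hmat B θ := by
  simp only [Hmat, conjTranspose_sub]
  module

theorem Hmat_smul_one (z : ℂ) (θ : ℝ) :
    Hmat (z • (1 : Matrix (Fin n) (Fin n) ℂ)) θ = ((cexp (-θ * I) * z).re : ℂ) • 1 := by
  have hconj : starRingEnd ℂ (cexp (-θ * I) * z) = cexp (θ * I) * starRingEnd ℂ z := by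
    rw [map_mul, ← exp_conj]
    simp
  simp only [Hmat, conjTranspose_smul, conjTranspose_one, smul_smul, ← add_smul,
    re_eq_add_conj, hconj]
  congr 1
  simp only [star_def]
  ring

theorem Hmat_eq_smul (M : Matrix (Fin n) (Fin n) ℂ) (θ : ℝ) :
    Hmat M θ = (cexp (-θ * I) / 2) • (M + cexp (2 * θ * I) • Mᴴ) := by
  have hexp : cexp (-θ * I) * cexp (2 * θ * I) = cexp (θ * I) := by
    rw [← exp_add]
    ring_nf
  rw [Hmat, ← hexp]
  module

theorem det_Hmat_eq_eval (M : Matrix (Fin n) (Fin n) ℂ) (θ : ℝ) :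
    (Hmat M θ).det = (cexp (-θ * I) / 2) ^ n *
      (det ((X : ℂ[X]) • Mᴴ.map C + M.map C)).eval (cexp (2 * θ * I)) := by
  rw [Hmat_eq_smul, det_smul, Fintype.card_fin, eval_det_X_smul_map_C_add, add_comm]

end Hmat

/-- The function `θ ↦ det(H(θ) − Re(z e^{−iθ}) Iₙ)`, if not identically zero, has at
most `n` zeros in `[0, π)`. -/
theorem det_Hmat_zeros_le
    (n : ℕ) (A : Matrix (Fin n) (Fin n) ℂ) (z : ℂ)
    (g : ℝ → ℂ)
    (hg : g = fun θ : ℝ =>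
      (Hmat A θ - (((Complex.exp (-(θ : ℂ) * Complex.I) * z).re : ℂ)) •
          (1 : Matrix (Fin n) (Fin n) ℂ)).det)
    (hne : ∃ θ : ℝ, g θ ≠ 0) :
    {θ ∈ Set.Ico (0 : ℝ) Real.pi | g θ = 0}.Finite ∧
      {θ ∈ Set.Ico (0 : ℝ) Real.pi | g θ = 0}.ncard ≤ n := by
  set M := A - z • (1 : Matrix (Fin n) (Fin n) ℂ)
  set P := det ((X : ℂ[X]) • Mᴴ.map C + M.map C)
  have hgP : ∀ θ : ℝ, g θ = (cexp (-θ * I) / 2) ^ n * P.eval (cexp (2 * θ * I)) := by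
    intro θ
    rw [hg, ← det_Hmat_eq_eval, Hmat_sub, Hmat_smul_one]
  have hP : P ≠ 0 := by
    obtain ⟨θ, hθ⟩ := hne
    rintro hP
    simp [hgP, hP] at hθ
  have hroot : ∀ θ ∈ {θ ∈ Ico (0 : ℝ) Real.pi | g θ = 0},
      P.IsRoot (cexp (2 * θ * I)) := by
    rintro θ ⟨-, hθ⟩
    simpa [hgP, exp_ne_zero] using hθ
  obtain ⟨hfin, hcard⟩ := finite_and_ncard_le_natDegree_of_injOn hP hroot
    (injOn_exp_two_mul_I.mono fun _ hθ ↦ hθ.1)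
  exact ⟨hfin, hcard.trans ((natDegree_det_X_add_C_le _ _).trans_eq (Fintype.card_fin n))⟩
end
end
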